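/- arXiv:2507.05040 — 3 statements merged into one kernel-verified Lean document; each statement's English description precedes it below -/
import Mathlib

section
/- Let a, b ∈ ℝ, set Λ_k = k(k−1) + a·k + b, and let u : ℕ → ℝ be any sequence. Then for every natural number n ≥ 2: Σ_{k=0}^{n} Σ_{j=0}^{k} (−1)^{k−j} · Λ_k · C(n,k) · C(k,j) · u_j = (n² + (a−1)n + b)·u_n − n(a + 2n − 2)·u_{n−1} + n(n−1)·u_{n−2}. -/
open Finset

lemma L0 (N : ℕ) : ∑ m ∈ range (N+1), (-1:ℝ)^m * (N.choose m : ℝ)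
    = if N = 0 then 1 else 0 := by
  have := @Int.alternating_sum_range_choose N
  have : ((∑ i ∈ range (N+1), (-1:ℤ)^i * (N.choose i : ℤ) : ℤ) : ℝ)
      = ((if N = 0 then 1 else 0 : ℤ) : ℝ) := by rw [this]
  push_cast at this
  simpa using this

lemma L1 (N : ℕ) : ∑ m ∈ range (N+1), (-1:ℝ)^m * (m:ℝ) * (N.choose m : ℝ)
    = if N = 1 then -1 else 0 := by
  cases N with
  | zero => simp
  | succ M =>
    rw [Finset.sum_range_succ' (fun m => (-1:ℝ)^m * (m:ℝ) * ((M+1).choose m : ℝ))]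
    have key : ∀ k : ℕ, (-1:ℝ)^(k+1) * ((k:ℝ)+1) * (((M+1).choose (k+1)) : ℝ)
        = -((M:ℝ)+1) * ((-1:ℝ)^k * (M.choose k : ℝ)) := by
      intro k
      have h := Nat.add_one_mul_choose_eq M k
      have h' : ((M+1) * M.choose k : ℝ) = ((M+1).choose (k+1) * (k+1) : ℕ) := by
        exact_mod_cast congrArg (fun x : ℕ => (x:ℝ)) h
      push_cast at h'
      linear_combination ((-1:ℝ)^k) * h'
    calc ∑ k ∈ range (M+1), (-1:ℝ)^(k+1) * ((k+1:ℕ):ℝ) * (((M+1).choose (k+1)) : ℝ)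
          + (-1:ℝ)^0 * ((0:ℕ):ℝ) * (((M+1).choose 0) : ℝ)
        = ∑ k ∈ range (M+1), -((M:ℝ)+1) * ((-1:ℝ)^k * (M.choose k : ℝ)) := by
          rw [Finset.sum_congr rfl (fun k _ => by push_cast; rw [key k])]; push_cast; ring
      _ = -((M:ℝ)+1) * (if M = 0 then 1 else 0) := by rw [← Finset.mul_sum, L0]
      _ = if M + 1 = 1 then -1 else 0 := by
          rcases Nat.eq_zero_or_pos M with h | h
          · simp [h]
          · rw [if_neg (by omega), if_neg (by omega), mul_zero]

lemma L2 (N : ℕ) : ∑ m ∈ range (N+1), (-1:ℝ)^m * (m:ℝ) * ((m:ℝ)-1) * (N.choose m : ℝ)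
    = if N = 2 then 2 else 0 := by
  cases N with
  | zero => simp
  | succ M =>
    rw [Finset.sum_range_succ' (fun m => (-1:ℝ)^m * (m:ℝ) * ((m:ℝ)-1) * ((M+1).choose m : ℝ))]
    have key : ∀ k : ℕ, (-1:ℝ)^(k+1) * ((k:ℝ)+1) * (((k:ℝ)+1)-1) * (((M+1).choose (k+1)) : ℝ)
        = -((M:ℝ)+1) * ((-1:ℝ)^k * (k:ℝ) * (M.choose k : ℝ)) := by
      intro k
      have h := Nat.add_one_mul_choose_eq M k
      have h' : ((M+1) * M.choose k : ℝ) = ((M+1).choose (k+1) * (k+1) : ℕ) := by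
        exact_mod_cast congrArg (fun x : ℕ => (x:ℝ)) h
      push_cast at h'
      linear_combination ((-1:ℝ)^k * (k:ℝ)) * h'
    calc ∑ k ∈ range (M+1), (-1:ℝ)^(k+1) * ((k+1:ℕ):ℝ) * (((k+1:ℕ):ℝ)-1) * (((M+1).choose (k+1)) : ℝ)
          + (-1:ℝ)^0 * ((0:ℕ):ℝ) * (((0:ℕ):ℝ)-1) * (((M+1).choose 0) : ℝ)
        = ∑ k ∈ range (M+1), -((M:ℝ)+1) * ((-1:ℝ)^k * (k:ℝ) * (M.choose k : ℝ)) := by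
          rw [Finset.sum_congr rfl (fun k _ => by push_cast; rw [key k])]; push_cast; ring
      _ = -((M:ℝ)+1) * (if M = 1 then -1 else 0) := by rw [← Finset.mul_sum, L1]
      _ = if M + 1 = 2 then 2 else 0 := by
          rcases eq_or_ne M 1 with h | h
          · simp [h]; norm_num
          · rw [if_neg h, if_neg (by omega), mul_zero]

lemma coeff (a : ℝ) (Λ : ℕ → ℝ)
    (hΛ2 : ∀ j m : ℕ, Λ (j+m) = Λ j + (2*(j:ℝ)+a)*(m:ℝ) + (m:ℝ)*((m:ℝ)-1))
    (j N : ℕ) :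
    ∑ m ∈ range (N + 1),
        (-1:ℝ)^m * Λ (j+m) * (((j+N).choose (j+m)) : ℝ) * (((j+m).choose j) : ℝ)
    = (((j+N).choose j) : ℝ) * (Λ j * (if N = 0 then 1 else 0)
        + (2*(j:ℝ)+a) * (if N = 1 then -1 else 0) + (if N = 2 then 2 else 0)) := by
  calc ∑ m ∈ range (N + 1),
        (-1:ℝ)^m * Λ (j+m) * (((j+N).choose (j+m)) : ℝ) * (((j+m).choose j) : ℝ)
      = ∑ m ∈ range (N+1), (((j+N).choose j : ℝ) * (Λ j * ((-1:ℝ)^m * (N.choose m:ℝ)))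
          + ((j+N).choose j : ℝ) * ((2*(j:ℝ)+a) * ((-1:ℝ)^m * (m:ℝ) * (N.choose m:ℝ)))
          + ((j+N).choose j : ℝ) * ((-1:ℝ)^m * (m:ℝ) * ((m:ℝ)-1) * (N.choose m:ℝ))) := by
        refine Finset.sum_congr rfl fun m hm => ?_
        have hc : (j+N).choose (j+m) * (j+m).choose j = (j+N).choose j * N.choose m := by
          have h := Nat.choose_mul (n := j+N) (k := j+m) (Nat.le_add_right j m)
          simpa using h
        have hc' : (((j+N).choose (j+m)) : ℝ) * (((j+m).choose j) : ℝ)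
            = (((j+N).choose j) : ℝ) * ((N.choose m) : ℝ) := by exact_mod_cast hc
        rw [hΛ2 j m]
        linear_combination ((-1:ℝ)^m * (Λ j + (2*(j:ℝ)+a)*(m:ℝ) + (m:ℝ)*((m:ℝ)-1))) * hc'
    _ = (((j+N).choose j) : ℝ) * (Λ j * (if N = 0 then 1 else 0)
        + (2*(j:ℝ)+a) * (if N = 1 then -1 else 0) + (if N = 2 then 2 else 0)) := by
        rw [Finset.sum_add_distrib, Finset.sum_add_distrib,
          ← Finset.mul_sum, ← Finset.mul_sum, ← Finset.mul_sum,
          ← Finset.mul_sum, ← Finset.mul_sum, L0, L1, L2, mul_add, mul_add]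

/-- The double sum arising in the discretization of the Euler equation collapses to the
three-point discrete Euler equation: for `n ≥ 2` and `Λ_k = k(k-1)+ak+b`,
`Σ_{k=0}^n Σ_{j=0}^k (-1)^{k-j} Λ_k C(n,k) C(k,j) u_j
  = (n²+(a-1)n+b) u_n - n(a+2n-2) u_{n-1} + n(n-1) u_{n-2}`. -/
theorem stmt_8 (a b : ℝ) (Λ : ℕ → ℝ)
    (hΛ : ∀ k : ℕ, Λ k = (k : ℝ) * ((k : ℝ) - 1) + a * k + b)
    (u : ℕ → ℝ) (n : ℕ) (hn : 2 ≤ n) :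
    ∑ k ∈ Finset.range (n + 1), ∑ j ∈ Finset.range (k + 1),
        (-1 : ℝ) ^ (k - j) * Λ k * (Nat.choose n k : ℝ) * (Nat.choose k j : ℝ) * u j
      = ((n : ℝ) ^ 2 + (a - 1) * n + b) * u n
        - (n : ℝ) * (a + 2 * n - 2) * u (n - 1)
        + (n : ℝ) * ((n : ℝ) - 1) * u (n - 2) := by
  have hΛ2 : ∀ j m : ℕ, Λ (j+m) = Λ j + (2*(j:ℝ)+a)*(m:ℝ) + (m:ℝ)*((m:ℝ)-1) := by
    intro j m; rw [hΛ, hΛ]; push_cast; ring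
  obtain ⟨M, rfl⟩ : ∃ M, n = M + 2 := ⟨n - 2, by omega⟩
  set f : ℕ → ℕ → ℝ := fun j k =>
    (-1 : ℝ) ^ (k - j) * Λ k * ((M+2).choose k : ℝ) * (k.choose j : ℝ) * u j with hf
  have swap : ∑ k ∈ Finset.range (M+2+1), ∑ j ∈ Finset.range (k + 1), f j k
      = ∑ j ∈ Finset.range (M+3), ∑ k ∈ Finset.Ico j (M+3), f j k := by
    simp only [← Nat.Ico_zero_eq_range]
    exact (Finset.sum_Ico_Ico_comm 0 (M+3) f).symm
  rw [show M+2+1 = M+3 from rfl] at *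
  calc ∑ k ∈ Finset.range (M+3), ∑ j ∈ Finset.range (k + 1), f j k
      = ∑ j ∈ Finset.range (M+3), ∑ k ∈ Finset.Ico j (M+3), f j k := swap
    _ = ∑ j ∈ Finset.range (M+3), (((M+2).choose j : ℝ) * (Λ j * (if M+2-j = 0 then 1 else 0)
          + (2*(j:ℝ)+a) * (if M+2-j = 1 then -1 else 0)
          + (if M+2-j = 2 then 2 else 0))) * u j := by
        refine Finset.sum_congr rfl fun j hj => ?_
        have hj' : j ≤ M + 2 := by
          simp only [Finset.mem_range, Nat.lt_succ_iff] at hj; exact hj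
        obtain ⟨N, hN⟩ : ∃ N, M + 2 = j + N := ⟨M+2-j, by omega⟩
        rw [Finset.sum_Ico_eq_sum_range]
        have hr : M + 3 - j = N + 1 := by omega
        rw [hr]
        have step : ∀ m : ℕ, f j (j + m)
            = ((-1:ℝ)^m * Λ (j+m) * (((j+N).choose (j+m)) : ℝ) * (((j+m).choose j) : ℝ)) * u j := by
          intro m
          rw [hf]
          simp only [Nat.add_sub_cancel_left, ← hN]
        calc ∑ m ∈ Finset.range (N+1), f j (j + m)
            = (∑ m ∈ Finset.range (N+1),
                (-1:ℝ)^m * Λ (j+m) * (((j+N).choose (j+m)) : ℝ) * (((j+m).choose j) : ℝ)) * u j := by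
              rw [Finset.sum_mul]; exact Finset.sum_congr rfl fun m _ => step m
          _ = (((M+2).choose j : ℝ) * (Λ j * (if M+2-j = 0 then 1 else 0)
                + (2*(j:ℝ)+a) * (if M+2-j = 1 then -1 else 0)
                + (if M+2-j = 2 then 2 else 0))) * u j := by
              rw [coeff a Λ hΛ2 j N, ← hN]
              have hNj : N = M + 2 - j := by omega
              rw [hNj]
    _ = ((((M+2):ℕ) : ℝ) ^ 2 + (a - 1) * ((M+2):ℕ) + b) * u (M+2)
        - (((M+2):ℕ) : ℝ) * (a + 2 * ((M+2):ℕ) - 2) * u (M+2-1)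
        + (((M+2):ℕ) : ℝ) * ((((M+2):ℕ) : ℝ) - 1) * u (M+2-2) := by
        rw [Finset.sum_range_succ, Finset.sum_range_succ, Finset.sum_range_succ]
        have hz : ∑ j ∈ Finset.range M, (((M+2).choose j : ℝ) * (Λ j * (if M+2-j = 0 then 1 else 0)
            + (2*(j:ℝ)+a) * (if M+2-j = 1 then -1 else 0)
            + (if M+2-j = 2 then 2 else 0))) * u j = 0 := by
          refine Finset.sum_eq_zero fun j hj => ?_
          have : j < M := Finset.mem_range.mp hj
          rw [if_neg (by omega), if_neg (by omega), if_neg (by omega)]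
          ring
        rw [hz]
        have e1 : (M+2).choose M = (M+2).choose 2 := by
          have h := Nat.choose_symm (show 2 ≤ M+2 by omega)
          rwa [show M+2-2 = M from rfl] at h
        have e3 : (M+2).choose M * 2 = (M+2)*(M+1) := by
          rw [e1, Nat.choose_two_right, show M+2-1 = M+1 from rfl]
          have hd : 2 ∣ (M+2)*(M+1) := by
            have := Nat.even_mul_succ_self (M+1)
            rw [mul_comm]
            exact this.two_dvd
          exact Nat.div_mul_cancel hd
        have e3r : ((M+2).choose M : ℝ) * 2 = ((M:ℝ)+2)*((M:ℝ)+1) := by exact_mod_cast e3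
        rw [if_neg (by omega), if_neg (by omega), if_pos (by omega : M+2-M = 2),
          if_neg (by omega), if_pos (by omega : M+2-(M+1) = 1), if_neg (by omega),
          if_pos (by omega : M+2-(M+2) = 0), if_neg (by omega), if_neg (by omega)]
        rw [Nat.choose_self, Nat.choose_succ_self_right, hΛ (M+2)]
        rw [show M+2-1 = M+1 from rfl, show M+2-2 = M from rfl]
        push_cast
        linear_combination (u M) * e3r
end

section
/- Let h > 0, a, b ∈ ℝ, and let ζ : ℕ → ℝ satisfy (k(k−1) + a·k + b)·ζ_k = 0 for every k ∈ ℕ. Define u : ℕ → ℝ by u_n = Σ_{k=0}^{n} (n! · h^k / (n−k)!) · ζ_k. Then u solves the discrete Euler equation: for every natural number n ≥ 2, (n² + (a−1)n + b)·u_n − n(a + 2n − 2)·u_{n−1} + n(n−1)·u_{n−2} = 0. -/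
/-!
Writing `n! h^k / (n-k)!` as the falling factorial `n^(k) h^k`, the equation is linear in `u`, so it
suffices to apply the difference operator to a single falling factorial. Since
`n (n-1)^(k) = n^(k+1) = (n-k) n^(k)` and `n (n-1) (n-2)^(k) = n^(k+2) = (n-k)(n-k-1) n^(k)`, it maps
`n^(k)` to `Λ_k n^(k)`, exactly as the Euler operator maps `x^k` to `Λ_k x^k`. Hence the operator
sends `u` to `∑ Λ_k n^(k) h^k ζ_k = 0`.
-/

open Finset

lemma Nat.cast_descFactorial_succ {R : Type*} [CommRing R] (n k : ℕ) :
    (n.descFactorial (k + 1) : R) = ((n : R) - k) * n.descFactorial k := by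
  rcases le_or_gt k n with hkn | hnk
  · rw [Nat.descFactorial_succ, Nat.cast_mul, Nat.cast_sub hkn]
  · rw [Nat.descFactorial_eq_zero_iff_lt.2 hnk, Nat.descFactorial_eq_zero_iff_lt.2 (by omega),
      Nat.cast_zero, mul_zero]

lemma Nat.cast_factorial_div_factorial_sub {K : Type*} [Field K] [CharZero K] {n k : ℕ}
    (hkn : k ≤ n) : (n.factorial : K) / ((n - k).factorial : K) = n.descFactorial k := by
  rw [← Nat.factorial_mul_descFactorial hkn, Nat.cast_mul,
    mul_div_cancel_left₀ _ (Nat.cast_ne_zero.2 (Nat.factorial_ne_zero _))]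

lemma sum_range_descFactorial_mul_eq {R : Type*} [CommSemiring R] (c : ℕ → R) {n N : ℕ}
    (hnN : n < N) :
    ∑ k ∈ range (n + 1), (n.descFactorial k : R) * c k
      = ∑ k ∈ range N, (n.descFactorial k : R) * c k := by
  refine sum_subset (range_subset_range.2 hnN) fun k _ hk => ?_
  rw [Nat.descFactorial_eq_zero_iff_lt.2 (by simpa using hk), Nat.cast_zero, zero_mul]

lemma Nat.cast_succ_mul_descFactorial {R : Type*} [CommRing R] (n k : ℕ) :
    ((n + 1 : ℕ) : R) * n.descFactorial k = (((n + 1 : ℕ) : R) - k) * (n + 1).descFactorial k := by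
  rw [← Nat.cast_descFactorial_succ, Nat.succ_descFactorial_succ, Nat.cast_mul]

-- Stated at `n + 2` to avoid truncated subtraction in `n - 1` and `n - 2`.
lemma discreteEuler_descFactorial (a b : ℝ) (n k : ℕ) :
    (((n + 2 : ℕ) : ℝ) ^ 2 + (a - 1) * (n + 2 : ℕ) + b) * (n + 2).descFactorial k
      - ((n + 2 : ℕ) : ℝ) * (a + 2 * (n + 2 : ℕ) - 2) * (n + 1).descFactorial k
      + ((n + 2 : ℕ) : ℝ) * (((n + 2 : ℕ) : ℝ) - 1) * n.descFactorial k
      = ((k : ℝ) * ((k : ℝ) - 1) + a * k + b) * (n + 2).descFactorial k := by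
  have h₂ := Nat.cast_succ_mul_descFactorial (R := ℝ) (n + 1) k
  have h₁ := Nat.cast_succ_mul_descFactorial (R := ℝ) n k
  push_cast at h₁ h₂ ⊢
  linear_combination (n + 2 : ℝ) * h₁ + ((n + 1 - k : ℝ) - (a + 2 * (n + 2) - 2)) * h₂

theorem stmt_10_general (h : ℝ) (a b : ℝ) (ζ : ℕ → ℝ)
    (hζ : ∀ k : ℕ, ((k : ℝ) * ((k : ℝ) - 1) + a * k + b) * ζ k = 0)
    (u : ℕ → ℝ)
    (hu : ∀ n, u n = ∑ k ∈ Finset.range (n + 1),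
      (Nat.factorial n : ℝ) * h ^ k / (Nat.factorial (n - k) : ℝ) * ζ k) :
    ∀ n : ℕ, 2 ≤ n →
      ((n : ℝ) ^ 2 + (a - 1) * n + b) * u n
        - (n : ℝ) * (a + 2 * n - 2) * u (n - 1)
        + (n : ℝ) * ((n : ℝ) - 1) * u (n - 2) = 0 := by
  intro n hn
  obtain ⟨m, rfl⟩ : ∃ m, n = m + 2 := ⟨n - 2, by omega⟩
  have hu' : ∀ j < m + 3, u j = ∑ k ∈ range (m + 3), (j.descFactorial k : ℝ) * (h ^ k * ζ k) := by
    intro j hj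
    rw [hu, ← sum_range_descFactorial_mul_eq _ hj]
    refine sum_congr rfl fun k hk => ?_
    rw [mul_div_right_comm,
      Nat.cast_factorial_div_factorial_sub (by simpa [Nat.lt_succ_iff] using hk), mul_assoc]
  rw [show m + 2 - 1 = m + 1 from rfl, show m + 2 - 2 = m from rfl,
    hu' (m + 2) (by omega), hu' (m + 1) (by omega), hu' m (by omega),
    mul_sum, mul_sum, mul_sum, ← sum_sub_distrib, ← sum_add_distrib]
  refine sum_eq_zero fun k _ => ?_
  linear_combination (h ^ k * ζ k) * discreteEuler_descFactorial a b m k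
    + ((m + 2).descFactorial k * h ^ k : ℝ) * hζ k

/-- If `(k(k-1)+ak+b) ζ_k = 0` for all `k`, then
`u_n = Σ_{k=0}^n (n! h^k/(n-k)!) ζ_k` solves the discrete Euler equation
`(n²+(a-1)n+b) u_n - n(a+2n-2) u_{n-1} + n(n-1) u_{n-2} = 0` for all `n ≥ 2`. -/
theorem stmt_10 (h : ℝ) (hh : 0 < h) (a b : ℝ) (ζ : ℕ → ℝ)
    (hζ : ∀ k : ℕ, ((k : ℝ) * ((k : ℝ) - 1) + a * k + b) * ζ k = 0)
    (u : ℕ → ℝ)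
    (hu : ∀ n, u n = ∑ k ∈ Finset.range (n + 1),
      (Nat.factorial n : ℝ) * h ^ k / (Nat.factorial (n - k) : ℝ) * ζ k) :
    ∀ n : ℕ, 2 ≤ n →
      ((n : ℝ) ^ 2 + (a - 1) * n + b) * u n
        - (n : ℝ) * (a + 2 * n - 2) * u (n - 1)
        + (n : ℝ) * ((n : ℝ) - 1) * u (n - 2) = 0 :=
  stmt_10_general h a b ζ hζ u hu
end

section
/- Let r ∈ ℕ and a, b ∈ ℝ satisfy r(r−1) + a·r + b = 0 (with r cast to ℝ). Define u : ℕ → ℝ by u_n = ∏_{j=0}^{r−1} (n − j) (so that u_n = n!/(n−r)! for n ≥ r and u_n = 0 for n < r). Then u is an exact solution of the discrete Euler equation: for every natural number n ≥ 2, (n² + (a−1)n + b)·u_n − n(a + 2n − 2)·u_{n−1} + n(n−1)·u_{n−2} = 0. -/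
/-! The basic polynomial `p_r(x) = x (x - 1) ⋯ (x - r + 1)` is the descending Pochhammer
polynomial, and it satisfies the first-order relation `x p_r(x - 1) = (x - r) p_r(x)`, both sides
being `p_{r+1}(x)`. Applying it at `n` and at `n - 1` expresses `u_{n-1}` and `u_{n-2}` through
`u_n`, and the three-term expression collapses to `Λ_r u_n = 0`. -/

open Polynomial

lemma descPochhammer_eval_sub_one {R : Type*} [CommRing R] (r : ℕ) (x : R) :
    x * (descPochhammer R r).eval (x - 1) = (x - r) * (descPochhammer R r).eval x := by
  have h := descPochhammer_succ_eval r x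
  rw [descPochhammer_succ_left, eval_mul, eval_X, eval_comp, eval_sub, eval_X, eval_one] at h
  rw [h, mul_comm]

lemma natCast_mul_descPochhammer_eval_pred {R : Type*} [CommRing R] (r : ℕ) {k : ℕ}
    (hk : 1 ≤ k) :
    (k : R) * (descPochhammer R r).eval ((k - 1 : ℕ) : R)
      = ((k : R) - r) * (descPochhammer R r).eval (k : R) := by
  rw [Nat.cast_sub hk, Nat.cast_one, descPochhammer_eval_sub_one]

/-- If `r ∈ ℕ` is a root of the indicial polynomial `r(r-1)+ar+b`, then
`u_n = ∏_{j=0}^{r-1} (n - j)` is an exact solution of the discrete Euler equation. -/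
theorem stmt_11 (r : ℕ) (a b : ℝ)
    (hroot : (r : ℝ) * ((r : ℝ) - 1) + a * r + b = 0)
    (u : ℕ → ℝ)
    (hu : ∀ n : ℕ, u n = ∏ j ∈ Finset.range r, ((n : ℝ) - (j : ℝ))) :
    ∀ n : ℕ, 2 ≤ n →
      ((n : ℝ) ^ 2 + (a - 1) * n + b) * u n
        - (n : ℝ) * (a + 2 * n - 2) * u (n - 1)
        + (n : ℝ) * ((n : ℝ) - 1) * u (n - 2) = 0 := by
  intro n hn
  have hu' : ∀ k : ℕ, u k = (descPochhammer ℝ r).eval (k : ℝ) := fun k => by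
    rw [hu, descPochhammer_eval_eq_prod_range]
  have hn1 : ((n - 1 : ℕ) : ℝ) = n - 1 := by rw [Nat.cast_sub (by omega), Nat.cast_one]
  have h1 : (n : ℝ) * u (n - 1) = (n - r) * u n := by
    rw [hu', hu']
    exact natCast_mul_descPochhammer_eval_pred r (by omega)
  have h2 : ((n : ℝ) - 1) * u (n - 2) = (n - 1 - r) * u (n - 1) := by
    rw [hu', hu', ← hn1, show n - 2 = n - 1 - 1 by omega]
    exact natCast_mul_descPochhammer_eval_pred r (by omega)
  linear_combination (n : ℝ) * h2 + ((n : ℝ) - 1 - r - (a + 2 * n - 2)) * h1 + u n * hroot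
end
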